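/- Let c be an edge-coloring of K_n and L a representing graph of c (one edge per color). Suppose L contains a complete p-partite subgraph with parts B_1,…,B_p of size 2v each, and additionally a matching M_{2k} of k edges inside B_1, where v is at least the number of vertices of every graph in a family 𝔉 and some F ∈ 𝔉 satisfies F ⊆ T(vp,p; M_{2k−2}, M_2). If x,y are two vertices in B_2 with xy colored c(xy), then the graph obtained from L by removing the edge of color c(xy) and adding the edge xy contains T(vp,p; M_{2k−2}, M_2), and hence K_n contains a rainbow copy of F. -/

import Mathlib

open SimpleGraph

universe u v

/-- `F` embeds into `G` as a subgraph (injective graph homomorphism). -/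
def Embeds {α : Type u} {β : Type v} (F : SimpleGraph α) (G : SimpleGraph β) : Prop :=
  ∃ f : α ↪ β, ∀ a b, F.Adj a b → G.Adj (f a) (f b)

/-- Join of two graphs: all cross edges added. -/
def join {α β : Type*} (G : SimpleGraph α) (H : SimpleGraph β) : SimpleGraph (α ⊕ β) where
  Adj x y :=
    match x, y with
    | Sum.inl a, Sum.inl b => G.Adj a b
    | Sum.inr a, Sum.inr b => H.Adj a b
    | Sum.inl _, Sum.inr _ => True
    | Sum.inr _, Sum.inl _ => True
  symm := ⟨by
    rintro (a | a) (b | b) h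
    · exact G.adj_symm h
    · trivial
    · trivial
    · exact H.adj_symm h⟩
  loopless := ⟨by
    rintro (a | a) h
    · exact G.ne_of_adj h rfl
    · exact H.ne_of_adj h rfl⟩

/-- Disjoint union of two graphs. -/
def dUnion {α β : Type*} (G : SimpleGraph α) (H : SimpleGraph β) : SimpleGraph (α ⊕ β) where
  Adj x y :=
    match x, y with
    | Sum.inl a, Sum.inl b => G.Adj a b
    | Sum.inr a, Sum.inr b => H.Adj a b
    | Sum.inl _, Sum.inr _ => False
    | Sum.inr _, Sum.inl _ => False
  symm := ⟨by
    rintro (a | a) (b | b) h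
    · exact G.adj_symm h
    · exact h.elim
    · exact h.elim
    · exact H.adj_symm h⟩
  loopless := ⟨by
    rintro (a | a) h
    · exact G.ne_of_adj h rfl
    · exact H.ne_of_adj h rfl⟩

/-- The star `S_{k+1}` on `k+1` vertices, with center `0`. -/
def starG (k : ℕ) : SimpleGraph (Fin (k + 1)) :=
  SimpleGraph.fromRel (fun i _ => i = 0)

/-- The matching `M_{2k}` consisting of `k` disjoint edges on `2k` vertices. -/
def matchingG (k : ℕ) : SimpleGraph (Fin (2 * k)) :=
  SimpleGraph.fromRel (fun i j => (i : ℕ) / 2 = (j : ℕ) / 2)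

/-- `Q(p,k) = K₁ ∨ T(pk,p)`. -/
def Q (p k : ℕ) : SimpleGraph (Unit ⊕ Fin (p * k)) :=
  join (⊤ : SimpleGraph Unit) (SimpleGraph.turanGraph (p * k) p)

/-- Number of edges of a graph. -/
noncomputable def eCount {α : Type*} (G : SimpleGraph α) : ℕ := Nat.card G.edgeSet

/-- `t(n,p)`, the number of edges of the Turán graph `T(n,p)`. -/
noncomputable def tur (n p : ℕ) : ℕ := eCount (SimpleGraph.turanGraph n p)

/-- Degree of a vertex, instance-free. -/
noncomputable def ndeg {α : Type*} (G : SimpleGraph α) (v : α) : ℕ := Nat.card (G.neighborSet v)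

/-- An edge-coloring `c` of `K_n` admits a rainbow copy of `F`. -/
def HasRainbow {n : ℕ} {β : Type*} (c : Sym2 (Fin n) → ℕ) (F : SimpleGraph β) : Prop :=
  ∃ f : β ↪ Fin n, ∀ a b a' b', F.Adj a b → F.Adj a' b' →
    c s(f a, f b) = c s(f a', f b') → s(a, b) = s(a', b')

/-- Number of colors used on the edges of `K_n` by the coloring `c`. -/
noncomputable def colorsUsed (n : ℕ) (c : Sym2 (Fin n) → ℕ) : ℕ :=
  Nat.card (c '' (⊤ : SimpleGraph (Fin n)).edgeSet)

/-- The Turán graph `T(vp,p)` with a matching of `k-1` edges added inside the part `0`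
and one extra edge added inside the part `1`. -/
def turanMM (w p k : ℕ) : SimpleGraph (Fin (w * p)) :=
  SimpleGraph.fromRel (fun i j =>
    ((i : ℕ) % p ≠ (j : ℕ) % p)
    ∨ ((i : ℕ) % p = 0 ∧ (j : ℕ) % p = 0 ∧ (i : ℕ) / p / 2 = (j : ℕ) / p / 2 ∧
        (i : ℕ) / p < 2 * (k - 1))
    ∨ ((i : ℕ) % p = 1 ∧ (j : ℕ) % p = 1 ∧ (i : ℕ) / p < 2 ∧ (j : ℕ) / p < 2))
open Function

/-! Since `L` is a representing graph, at most one edge `e ≠ xy` of `L` has the colour of `xy`.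
Pick an endpoint `w ∉ {x, y}` of `e` (if `e` exists), remove `w` from every part, and drop the
matching edge through `w` if there is one: each part keeps at least `2v - 1 ≥ v` vertices and
`B i₁` keeps `k - 1` matching edges, so `T(vp, p; M_{2k-2}, M_2)` embeds with its `M_2` edge sent
to `xy` and all its other edges sent to edges of `L` that the exchange does not touch. The
exchanged graph still has one edge per colour, so the copy of `F` inside it is rainbow. -/

theorem Embeds.trans {α β γ : Type*} {F : SimpleGraph α} {G : SimpleGraph β}
    {H : SimpleGraph γ} (hFG : Embeds F G) (hGH : Embeds G H) : Embeds F H := by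
  obtain ⟨f, hf⟩ := hFG
  obtain ⟨g, hg⟩ := hGH
  exact ⟨f.trans g, fun a b h => hg _ _ (hf _ _ h)⟩

theorem embeds_fromRel {α β : Type*} {r : α → α → Prop} {G : SimpleGraph β} (f : α ↪ β)
    (h : ∀ a b, a ≠ b → r a b → G.Adj (f a) (f b)) : Embeds (SimpleGraph.fromRel r) G :=
  ⟨f, fun a b hab => by
    obtain ⟨hne, hr | hr⟩ := (SimpleGraph.fromRel_adj _ _ _).1 hab
    exacts [h a b hne hr, (h b a hne.symm hr).symm]⟩

theorem hasRainbow_of_embeds {n : ℕ} {β : Type*} {c : Sym2 (Fin n) → ℕ}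
    {F : SimpleGraph β} {G : SimpleGraph (Fin n)} (hinj : Set.InjOn c G.edgeSet)
    (hFG : Embeds F G) : HasRainbow c F := by
  obtain ⟨f, hf⟩ := hFG
  refine ⟨f, fun a b a' b' h h' hc => Sym2.map.injective f.injective ?_⟩
  simpa using hinj (hf _ _ h) (hf _ _ h') hc

theorem exists_perm_apply_eq_apply_eq {α : Type*} [DecidableEq α] {z o i j : α}
    (hzo : z ≠ o) (hij : i ≠ j) : ∃ σ : Equiv.Perm α, σ z = i ∧ σ o = j := by
  have hj : Equiv.swap z i j ≠ z := fun h => hij <| by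
    simpa using (congrArg (Equiv.swap z i) h).symm
  refine ⟨Equiv.swap z i * Equiv.swap o (Equiv.swap z i j), ?_, ?_⟩
  · simp [Equiv.swap_apply_of_ne_of_ne hzo hj.symm]
  · simp

section

variable {V : Type*}

theorem exists_injective_sum_elim_comp_forall_ne {m : ℕ} {a b : Fin (m + 1) → V}
    (hab : Injective (Sum.elim a b)) (w : V) :
    ∃ f : Fin m → Fin (m + 1), Injective (Sum.elim (a ∘ f) (b ∘ f)) ∧
      ∀ i, a (f i) ≠ w ∧ b (f i) ≠ w := by
  obtain ⟨d, hd⟩ : ∃ d, ∀ i ≠ d, a i ≠ w ∧ b i ≠ w := by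
    by_cases h : ∃ s, Sum.elim a b s = w
    · obtain ⟨s, rfl⟩ := h
      refine ⟨s.elim id id, fun i hi => ⟨fun h => hi ?_, fun h => hi ?_⟩⟩
      · rw [← hab (a₁ := .inl i) h]; rfl
      · rw [← hab (a₁ := .inr i) h]; rfl
    · push Not at h
      exact ⟨0, fun i _ => ⟨h (.inl i), h (.inr i)⟩⟩
  refine ⟨d.succAbove, ?_, fun i => hd _ (d.succAbove_ne i)⟩
  rw [← Sum.elim_comp_map]
  exact hab.comp
    (Sum.map_injective.2 ⟨Fin.succAbove_right_injective, Fin.succAbove_right_injective⟩)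

theorem exists_injective_extend {s : Finset V} {m v : ℕ}
    (h : Fin m → V) (hinj : Injective h) (hs : ∀ i, h i ∈ s) (hv : v ≤ s.card) :
    ∃ g : Fin v → V, Injective g ∧ (∀ t, g t ∈ s) ∧
      ∀ t : Fin v, ∀ ht : (t : ℕ) < m, g t = h ⟨t, ht⟩ := by
  classical
  obtain ⟨e⟩ : Nonempty (Fin (v - m) ↪ ↥(s \ Finset.univ.image h)) := by
    refine Function.Embedding.nonempty_of_card_le ?_
    have := Finset.le_card_sdiff (Finset.univ.image h) s
    have := Finset.card_image_le (s := Finset.univ) (f := h)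
    simp only [Fintype.card_fin, Fintype.card_coe, Finset.card_univ] at *
    omega
  refine ⟨fun t => if ht : (t : ℕ) < m then h ⟨t, ht⟩ else e ⟨t - m, by omega⟩, ?_, ?_, ?_⟩
  · intro t t' htt'
    have he : ∀ t, (e t : V) ∉ Finset.univ.image h := fun t => (Finset.mem_sdiff.1 (e t).2).2
    simp only at htt'
    split_ifs at htt'
    · exact Fin.ext (Fin.mk.inj_iff.1 (hinj htt'))
    · exact absurd (htt' ▸ Finset.mem_image_of_mem h (Finset.mem_univ _)) (he _)
    · exact absurd (htt' ▸ Finset.mem_image_of_mem h (Finset.mem_univ _)) (he _)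
    · have := Fin.mk.inj_iff.1 (e.injective (Subtype.ext htt'))
      exact Fin.ext (by omega)
  · intro t
    dsimp only
    split_ifs
    exacts [hs _, (Finset.mem_sdiff.1 (e _).2).1]
  · intro t ht
    simp only [dif_pos ht]

def interleave {r : ℕ} (a b : Fin r → V) (t : Fin (2 * r)) : V :=
  if (t : ℕ) % 2 = 0 then a ⟨t / 2, by omega⟩ else b ⟨t / 2, by omega⟩

theorem interleave_injective {r : ℕ} {a b : Fin r → V} (hab : Injective (Sum.elim a b)) :
    Injective (interleave a b) := by
  intro t t' h
  unfold interleave at h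
  split_ifs at h
  · have := hab (a₁ := .inl _) (a₂ := .inl _) h
    simp only [Sum.inl.injEq, Fin.mk.injEq] at this
    omega
  · exact absurd (hab (a₁ := .inl _) (a₂ := .inr _) h) Sum.inl_ne_inr
  · exact absurd (hab (a₁ := .inr _) (a₂ := .inl _) h) Sum.inr_ne_inl
  · have := hab (a₁ := .inr _) (a₂ := .inr _) h
    simp only [Sum.inr.injEq, Fin.mk.injEq] at this
    omega

theorem interleave_mem {r : ℕ} {a b : Fin r → V} {s : Finset V} (hs : ∀ i, a i ∈ s ∧ b i ∈ s)
    (t : Fin (2 * r)) : interleave a b t ∈ s := by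
  unfold interleave
  split_ifs
  exacts [(hs _).1, (hs _).2]

theorem interleave_adj {r : ℕ} {a b : Fin r → V} {G : SimpleGraph V}
    (hadj : ∀ i, G.Adj (a i) (b i)) {t t' : Fin (2 * r)} (hne : t ≠ t')
    (h : (t : ℕ) / 2 = t' / 2) : G.Adj (interleave a b t) (interleave a b t') := by
  have hpar : (t : ℕ) % 2 ≠ t' % 2 := fun hp => hne (Fin.ext (by omega))
  unfold interleave
  split_ifs
  · omega
  · simpa only [h] using hadj ⟨t' / 2, by omega⟩
  · simpa only [h] using (hadj ⟨t' / 2, by omega⟩).symm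
  · omega

theorem exists_injective_matching_prefix (G : SimpleGraph V)
    {s : Finset V} {r v : ℕ} {a b : Fin r → V} (hab : Injective (Sum.elim a b))
    (hs : ∀ i, a i ∈ s ∧ b i ∈ s) (hadj : ∀ i, G.Adj (a i) (b i)) (hv : v ≤ s.card) :
    ∃ g : Fin v → V, Injective g ∧ (∀ t, g t ∈ s) ∧
      ∀ t t' : Fin v, t ≠ t' → (t : ℕ) / 2 = t' / 2 → (t : ℕ) < 2 * r → G.Adj (g t) (g t') := by
  obtain ⟨g, hg, hgs, hgh⟩ :=
    exists_injective_extend _ (interleave_injective hab) (interleave_mem hs) hv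
  refine ⟨g, hg, hgs, fun t t' hne hdiv ht => ?_⟩
  rw [hgh t ht, hgh t' (by omega)]
  exact interleave_adj hadj (fun h => hne (Fin.ext (Fin.mk.inj_iff.1 h))) hdiv

theorem injective_modNat_divNat {v P : ℕ} {C : Fin P → Finset V}
    (hdisj : Pairwise (Disjoint on C)) {g : Fin P → Fin v → V} (hg : ∀ q, Injective (g q))
    (hgC : ∀ q t, g q t ∈ C q) : Injective fun u : Fin (v * P) => g u.modNat u.divNat := by
  intro u u' (h : g u.modNat u.divNat = g u'.modNat u'.divNat)
  have hq : u.modNat = u'.modNat := by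
    by_contra hq
    have hu' : g u.modNat u.divNat ∈ C u'.modNat := h ▸ hgC _ _
    exact Finset.disjoint_left.1 (hdisj hq) (hgC _ _) hu'
  simp only [hq] at h
  exact finProdFinEquiv.symm.injective (by simp [hg _ h, hq])

theorem embeds_turanMM_of_forall_part (G : SimpleGraph V) {v p m : ℕ}
    {C : Fin (p + 2) → Finset V} (hdisj : Pairwise (Disjoint on C))
    (hcross : ∀ q q', q ≠ q' → ∀ u ∈ C q, ∀ u' ∈ C q', G.Adj u u')
    (g : Fin (p + 2) → Fin v → V) (hg : ∀ q, Injective (g q)) (hgC : ∀ q t, g q t ∈ C q)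
    (hg0 : ∀ t t' : Fin v, t ≠ t' → (t : ℕ) / 2 = t' / 2 → (t : ℕ) < 2 * m →
      G.Adj (g 0 t) (g 0 t'))
    (hg1 : ∀ t t' : Fin v, t ≠ t' → (t : ℕ) / 2 = t' / 2 → (t : ℕ) < 2 * 1 →
      G.Adj (g 1 t) (g 1 t')) :
    Embeds (turanMM v (p + 2) (m + 1)) G := by
  refine embeds_fromRel ⟨_, injective_modNat_divNat hdisj hg hgC⟩ fun u u' hne h => ?_
  show G.Adj (g _ _) (g _ _)
  have hdiv : u.modNat = u'.modNat → u.divNat ≠ u'.divNat := fun hq ht =>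
    hne (finProdFinEquiv.symm.injective (by simp [hq, ht]))
  rcases h with hq | ⟨hq, hq', ht, htm⟩ | ⟨hq, hq', ht, ht'⟩
  · exact hcross _ _ (fun h => hq (by simpa using congrArg Fin.val h)) _ (hgC _ _) _ (hgC _ _)
  · have h0 : u.modNat = 0 := Fin.ext (by simpa using hq)
    have h0' : u'.modNat = 0 := Fin.ext (by simpa using hq')
    rw [h0, h0']
    exact hg0 _ _ (hdiv (h0.trans h0'.symm)) (by simpa using ht) (by simpa using htm)
  · have h1 : u.modNat = 1 := Fin.ext (by simpa using hq)
    have h1' : u'.modNat = 1 := Fin.ext (by simpa using hq')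
    rw [h1, h1']
    exact hg1 _ _ (hdiv (h1.trans h1'.symm))
      (by simp only [Fin.coe_divNat, Nat.div_eq_of_lt ht, Nat.div_eq_of_lt ht']) (by simpa using ht)

theorem embeds_turanMM_of_parts (G : SimpleGraph V) {v p m : ℕ}
    (C : Fin (p + 2) → Finset V) (hdisj : Pairwise (Disjoint on C))
    (hcard : ∀ q, v ≤ (C q).card) (hcross : ∀ q q', q ≠ q' → ∀ u ∈ C q, ∀ u' ∈ C q', G.Adj u u')
    {a b : Fin m → V} (hab : Injective (Sum.elim a b))
    (habC : ∀ i, a i ∈ C 0 ∧ b i ∈ C 0) (hadj : ∀ i, G.Adj (a i) (b i))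
    {x y : V} (hx : x ∈ C 1) (hy : y ∈ C 1) (hxy : G.Adj x y) :
    Embeds (turanMM v (p + 2) (m + 1)) G := by
  have hpart : ∀ q, ∃ g : Fin v → V, Injective g ∧ (∀ t, g t ∈ C q) ∧
      (q = 0 → ∀ t t' : Fin v, t ≠ t' → (t : ℕ) / 2 = t' / 2 → (t : ℕ) < 2 * m →
        G.Adj (g t) (g t')) ∧
      (q = 1 → ∀ t t' : Fin v, t ≠ t' → (t : ℕ) / 2 = t' / 2 → (t : ℕ) < 2 * 1 →
        G.Adj (g t) (g t')) := by
    intro q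
    by_cases h0 : q = 0
    · subst h0
      obtain ⟨g, hg, hgC, hgG⟩ := exists_injective_matching_prefix G hab habC hadj (hcard 0)
      exact ⟨g, hg, hgC, fun _ => hgG, fun h => absurd h zero_ne_one⟩
    by_cases h1 : q = 1
    · subst h1
      have hxy' : Injective (Sum.elim ![x] ![y]) := by
        rintro (i | i) (j | j) h <;> fin_cases i <;> fin_cases j <;>
          simp_all [hxy.ne, hxy.ne.symm]
      obtain ⟨g, hg, hgC, hgG⟩ := exists_injective_matching_prefix G (a := ![x]) (b := ![y])
        hxy' (fun _ => by simpa using ⟨hx, hy⟩) (fun _ => by simpa using hxy) (hcard 1)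
      exact ⟨g, hg, hgC, fun h => absurd h.symm zero_ne_one, fun _ => hgG⟩
    obtain ⟨g, hg, hgC, -⟩ := exists_injective_extend (s := C q) finZeroElim
      (injective_of_subsingleton _) finZeroElim (hcard q)
    exact ⟨g, hg, hgC, fun h => absurd h h0, fun h => absurd h h1⟩
  choose g hg hgC hg0 hg1 using hpart
  exact embeds_turanMM_of_forall_part G hdisj hcross g hg hgC (hg0 0 rfl) (hg1 1 rfl)

theorem embeds_turanMM_of_parts_of_ne (G : SimpleGraph V) {v P m : ℕ} (hP : 2 ≤ P)
    (C : Fin P → Finset V) (hdisj : Pairwise (Disjoint on C))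
    (hcard : ∀ q, v ≤ (C q).card) (hcross : ∀ q q', q ≠ q' → ∀ u ∈ C q, ∀ u' ∈ C q', G.Adj u u')
    {i₁ i₂ : Fin P} (hi : i₁ ≠ i₂) {a b : Fin m → V} (hab : Injective (Sum.elim a b))
    (habC : ∀ i, a i ∈ C i₁ ∧ b i ∈ C i₁) (hadj : ∀ i, G.Adj (a i) (b i))
    {x y : V} (hx : x ∈ C i₂) (hy : y ∈ C i₂) (hxy : G.Adj x y) :
    Embeds (turanMM v P (m + 1)) G := by
  obtain ⟨p, rfl⟩ : ∃ p, P = p + 2 := ⟨P - 2, by omega⟩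
  obtain ⟨σ, rfl, rfl⟩ := exists_perm_apply_eq_apply_eq (zero_ne_one' (Fin (p + 2))) hi
  exact embeds_turanMM_of_parts G (C ∘ σ) (fun q q' h => hdisj (σ.injective.ne h))
    (fun q => hcard _) (fun q q' h => hcross _ _ (σ.injective.ne h)) hab habC hadj hx hy hxy

end

section

variable {V κ : Type*}

def exchange (c : Sym2 V → κ) (L : SimpleGraph V) (x y : V) : SimpleGraph V :=
  L.deleteEdges {e | c e = c s(x, y)} ⊔ SimpleGraph.fromRel (fun a b => a = x ∧ b = y)

variable {c : Sym2 V → κ} {L : SimpleGraph V} {x y : V}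

theorem exchange_adj_self (hxy : x ≠ y) : (exchange c L x y).Adj x y :=
  Or.inr ((SimpleGraph.fromRel_adj _ _ _).2 ⟨hxy, .inl ⟨rfl, rfl⟩⟩)

theorem exchange_adj_of_adj {u u' : V} (h : L.Adj u u')
    (hc : c s(u, u') = c s(x, y) → s(u, u') = s(x, y)) : (exchange c L x y).Adj u u' := by
  by_cases hcol : c s(u, u') = c s(x, y)
  · refine Or.inr ((SimpleGraph.fromRel_adj _ _ _).2 ⟨h.ne, ?_⟩)
    rcases Sym2.eq_iff.1 (hc hcol) with ⟨rfl, rfl⟩ | ⟨rfl, rfl⟩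
    exacts [.inl ⟨rfl, rfl⟩, .inr ⟨rfl, rfl⟩]
  · exact Or.inl (SimpleGraph.deleteEdges_adj.2 ⟨h, hcol⟩)

theorem injOn_edgeSet_exchange (hinj : Set.InjOn c L.edgeSet) :
    Set.InjOn c (exchange c L x y).edgeSet := by
  have hedge : ∀ e ∈ (exchange c L x y).edgeSet,
      e = s(x, y) ∨ (e ∈ L.edgeSet ∧ c e ≠ c s(x, y)) := by
    intro e
    induction e using Sym2.ind with | _ u u' =>
    rintro (h | h)
    · exact .inr (SimpleGraph.deleteEdges_adj.1 h)
    · rcases ((SimpleGraph.fromRel_adj _ _ _).1 h).2 with ⟨rfl, rfl⟩ | ⟨rfl, rfl⟩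
      exacts [.inl rfl, .inl Sym2.eq_swap]
  intro e₁ h₁ e₂ h₂ hc
  rcases hedge e₁ h₁ with rfl | ⟨h₁, hc₁⟩ <;> rcases hedge e₂ h₂ with rfl | ⟨h₂, hc₂⟩
  exacts [rfl, absurd hc.symm hc₂, absurd hc hc₁, hinj h₁ h₂ hc]

theorem exists_exchange_adj_of_adj (hinj : Set.InjOn c L.edgeSet) {z : V}
    (hz : z ∉ s(x, y)) : ∃ w ∉ s(x, y), ∀ u u', L.Adj u u' → u ≠ w → u' ≠ w →
      (exchange c L x y).Adj u u' := by
  by_cases hbad : ∃ u₀ u₁, L.Adj u₀ u₁ ∧ c s(u₀, u₁) = c s(x, y) ∧ s(u₀, u₁) ≠ s(x, y)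
  · obtain ⟨u₀, u₁, hL, hc, hne⟩ := hbad
    obtain ⟨w, hw₀, hw⟩ : ∃ w ∈ s(u₀, u₁), w ∉ s(x, y) := by
      by_contra! h
      exact hne ((Sym2.mem_and_mem_iff hL.ne).1
        ⟨h _ (Sym2.mem_mk_left _ _), h _ (Sym2.mem_mk_right _ _)⟩).symm
    refine ⟨w, hw, fun u u' h hu hu' => exchange_adj_of_adj h fun hc' => ?_⟩
    have he : s(u, u') = s(u₀, u₁) := hinj h hL (hc'.trans hc.symm)
    rw [← he, Sym2.mem_iff] at hw₀
    exact (hw₀.elim hu.symm hu'.symm).elim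
  · push Not at hbad
    exact ⟨z, hz, fun u u' h _ _ => exchange_adj_of_adj h (hbad u u' h)⟩

end

theorem stmt18_general {n : ℕ} (c : Sym2 (Fin n) → ℕ) (L : SimpleGraph (Fin n))
    (hinj : Set.InjOn c L.edgeSet)
    (p k v : ℕ) (hp : 2 ≤ p) (hk : 2 ≤ k)
    (B : Fin p → Finset (Fin n))
    (hdisj : ∀ i j, i ≠ j → Disjoint (B i) (B j))
    (hcard : ∀ i, (B i).card = 2 * v)
    (hcross : ∀ i j, i ≠ j → ∀ x ∈ B i, ∀ y ∈ B j, L.Adj x y)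
    (i₁ i₂ : Fin p) (hi : i₁ ≠ i₂)
    (a b : Fin k → Fin n)
    (hmatchmem : ∀ i, a i ∈ B i₁ ∧ b i ∈ B i₁ ∧ L.Adj (a i) (b i))
    (hmatchinj : Function.Injective (Sum.elim a b))
    {ι : Type*} {W : ι → Type*} (F : ∀ i, SimpleGraph (W i))
    (i₀ : ι) (hF : Embeds (F i₀) (turanMM v p k))
    (x y : Fin n) (hx : x ∈ B i₂) (hy : y ∈ B i₂) (hxy : x ≠ y) :
    Embeds (turanMM v p k)
      ((L.deleteEdges {e : Sym2 (Fin n) | c e = c s(x, y)}) ⊔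
        SimpleGraph.fromRel (fun a' b' => a' = x ∧ b' = y)) ∧
    HasRainbow c (F i₀) := by
  obtain ⟨m, rfl⟩ : ∃ m, k = m + 1 := ⟨k - 1, by omega⟩
  have ha₀ : a 0 ∉ s(x, y) := by
    rw [Sym2.mem_iff]
    rintro (h | h) <;> exact Finset.disjoint_left.1 (hdisj _ _ hi) (hmatchmem 0).1 (h ▸ ‹_›)
  obtain ⟨w, hw, hL'⟩ := exists_exchange_adj_of_adj hinj ha₀
  obtain ⟨f, hf, hfw⟩ := exists_injective_sum_elim_comp_forall_ne hmatchinj w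
  have hv : 0 < v := by
    have := Finset.card_pos.2 ⟨x, hx⟩
    rw [hcard] at this
    omega
  have hemb : Embeds (turanMM v p (m + 1)) (exchange c L x y) :=
    embeds_turanMM_of_parts_of_ne _ hp (fun q => (B q).erase w)
      (fun q q' h => (hdisj q q' h).mono (Finset.erase_subset _ _) (Finset.erase_subset _ _))
      (fun q => by
        have := Finset.pred_card_le_card_erase (s := B q) (a := w)
        rw [hcard] at this
        omega)
      (fun q q' h u hu u' hu' => hL' u u' (hcross _ _ h u (Finset.mem_of_mem_erase hu) u'
        (Finset.mem_of_mem_erase hu')) (Finset.ne_of_mem_erase hu) (Finset.ne_of_mem_erase hu'))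
      hi hf
      (fun i => ⟨Finset.mem_erase.2 ⟨(hfw i).1, (hmatchmem _).1⟩,
        Finset.mem_erase.2 ⟨(hfw i).2, (hmatchmem _).2.1⟩⟩)
      (fun i => hL' _ _ (hmatchmem _).2.2 (hfw i).1 (hfw i).2)
      (Finset.mem_erase.2 ⟨fun h => hw (h ▸ Sym2.mem_mk_left x y), hx⟩)
      (Finset.mem_erase.2 ⟨fun h => hw (h ▸ Sym2.mem_mk_right x y), hy⟩)
      (exchange_adj_self hxy)
  exact ⟨hemb, hasRainbow_of_embeds (injOn_edgeSet_exchange hinj) (hF.trans hemb)⟩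

theorem stmt18 {n : ℕ} (c : Sym2 (Fin n) → ℕ) (L : SimpleGraph (Fin n))
    (hinj : Set.InjOn c L.edgeSet)
    (hrep : ∀ e ∈ (⊤ : SimpleGraph (Fin n)).edgeSet, ∃ e' ∈ L.edgeSet, c e = c e')
    (p k v : ℕ) (hp : 2 ≤ p) (hk : 2 ≤ k)
    (B : Fin p → Finset (Fin n))
    (hdisj : ∀ i j, i ≠ j → Disjoint (B i) (B j))
    (hcard : ∀ i, (B i).card = 2 * v)
    (hcross : ∀ i j, i ≠ j → ∀ x ∈ B i, ∀ y ∈ B j, L.Adj x y)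
    (i₁ i₂ : Fin p) (hi : i₁ ≠ i₂)
    (a b : Fin k → Fin n)
    (hmatchmem : ∀ i, a i ∈ B i₁ ∧ b i ∈ B i₁ ∧ L.Adj (a i) (b i))
    (hmatchinj : Function.Injective (Sum.elim a b))
    {ι : Type*} {W : ι → Type*} [∀ i, Fintype (W i)] (F : ∀ i, SimpleGraph (W i))
    (hv : ∀ i, Fintype.card (W i) ≤ v)
    (i₀ : ι) (hF : Embeds (F i₀) (turanMM v p k))
    (x y : Fin n) (hx : x ∈ B i₂) (hy : y ∈ B i₂) (hxy : x ≠ y) :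
    Embeds (turanMM v p k)
      ((L.deleteEdges {e : Sym2 (Fin n) | c e = c s(x, y)}) ⊔
        SimpleGraph.fromRel (fun a' b' => a' = x ∧ b' = y)) ∧
    HasRainbow c (F i₀) :=
  stmt18_general c L hinj p k v hp hk B hdisj hcard hcross i₁ i₂ hi a b hmatchmem hmatchinj F i₀ hF
    x y hx hy hxy
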